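/- Let V be a finite set of points in ℝ² and d > 0. Call a subset C ⊆ V a global spatial cluster (GSC) if C is contained in a closed disk of diameter d and no strict superset C' ⊆ V with C ⊊ C' is contained in such a disk. Then every GSC C with |C| ≥ 1 satisfies: there exists a ∈ C and a closed disk of radius d/2 whose boundary contains a and which contains C, and C is exactly the set of points of V in that disk; in particular every GSC arises as a maximal set of points of V enclosed by a disk of radius d/2 whose boundary passes through one of its members. -/
import Mathlib


abbrev Pt := EuclideanSpace ℝ (Fin 2)

/-- `C` is a global spatial cluster of `V` with diameter threshold `d`: it is a subset of `V`
coverable by a closed disk of diameter `d`, and no strict superset within `V` is so coverable. -/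
def IsGSC (V C : Finset Pt) (d : ℝ) : Prop :=
  C ⊆ V ∧ (∃ c : Pt, ∀ p ∈ C, dist p c ≤ d / 2) ∧
    ∀ C' : Finset Pt, C' ⊆ V → C ⊂ C' → ¬ ∃ c : Pt, ∀ p ∈ C', dist p c ≤ d / 2

/-- Every nonempty global spatial cluster `C` arises as a maximal set of points of `V` enclosed
by a closed disk of radius `d/2` whose boundary passes through one of its members. -/
theorem stmt14 (V C : Finset Pt) (d : ℝ) (hd : 0 < d)
    (hC : IsGSC V C d) (hne : C.Nonempty) :
    ∃ a ∈ C, ∃ c : Pt, dist a c = d / 2 ∧ (∀ p ∈ C, dist p c ≤ d / 2) ∧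
      ∀ p ∈ V, dist p c ≤ d / 2 → p ∈ C := by
  classical
  obtain ⟨hCV, ⟨c0, hc0⟩, hmax⟩ := hC
  obtain ⟨a, haC, ha⟩ := C.exists_max_image (fun p => dist p c0) hne
  set r : ℝ := dist a c0 with hr
  have hr0 : 0 ≤ r := dist_nonneg
  have hrd : r ≤ d / 2 := hc0 a haC
  -- choose a unit vector u with c0 = a + r • u
  obtain ⟨u, hu1, hu2⟩ : ∃ u : Pt, ‖u‖ = 1 ∧ c0 = a + r • u := by
    rcases eq_or_lt_of_le hr0 with h0 | h0
    · refine ⟨EuclideanSpace.single 0 (1:ℝ), by simp, ?_⟩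
      have hac0 : a = c0 := dist_eq_zero.mp (hr.symm.trans h0.symm)
      rw [← hac0, ← h0]; simp
    · refine ⟨r⁻¹ • (c0 - a), ?_, ?_⟩
      · rw [norm_smul, norm_inv, Real.norm_eq_abs, abs_of_pos h0]
        have : ‖c0 - a‖ = r := by rw [hr, ← dist_eq_norm, dist_comm]
        rw [this]; field_simp
      · rw [smul_smul, mul_inv_cancel₀ (ne_of_gt h0), one_smul]; abel
  set c : Pt := a + (d / 2) • u with hc
  have hac : dist a c = d / 2 := by
    rw [hc, dist_eq_norm]
    simp [norm_smul, hu1, abs_of_pos hd]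
  have hc0c : dist c0 c = d / 2 - r := by
    rw [hu2, hc, dist_eq_norm]
    have : a + r • u - (a + (d / 2) • u) = (r - d / 2) • u := by
      rw [sub_smul]; abel
    rw [this, norm_smul, hu1, mul_one, Real.norm_eq_abs, abs_of_nonpos (by linarith)]
    ring
  have hcov : ∀ p ∈ C, dist p c ≤ d / 2 := by
    intro p hp
    calc dist p c ≤ dist p c0 + dist c0 c := dist_triangle _ _ _
      _ ≤ r + (d / 2 - r) := by
          have := ha p hp
          rw [hc0c]; exact add_le_add this le_rfl
      _ = d / 2 := by ring
  refine ⟨a, haC, c, hac, hcov, ?_⟩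
  intro p hpV hpc
  by_contra hpC
  refine hmax (insert p C) (Finset.insert_subset hpV hCV) (Finset.ssubset_insert hpC) ⟨c, ?_⟩
  intro q hq
  rcases Finset.mem_insert.mp hq with h | h
  · exact h ▸ hpc
  · exact hcov q h
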